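/- For every RVT code word W, the entries of the Puiseux characteristic PC(W) = [λ₀; λ₁, …, λ_g] computed by the front-end recursion are strictly increasing: λ₀ < λ₁ < ⋯ < λ_g. -/

import Mathlib

/-!
Along the recursion one carries a stronger invariant: `PC(W) = [λ₀; λ₁, …]` is positive and
strictly increasing, and `r λ₀ < λ₁` where `r` is the number of leading `R`'s of `W`.
Cases (A) and (C) add `λ₀` to a strictly increasing tail, and in case (A) the extra leading `R`
is paid for by `λ₁ + λ₀ > (r + 1) λ₀`. In case (B) the lifted word `L(W)` begins with
`R^(t+2)`, so the invariant for `L(W)` gives `λ₁ > (t+2) λ₀`, i.e. `(t+3) λ₀ < λ₁ + λ₀`;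
if instead `L(W)` is all `R`'s, then `PC(L(W)) = [1]` and there is no `λ₁` to compare.
-/

/-- The three symbols of an RVT code word. -/
inductive RVT : Type
  | R | V | T
deriving DecidableEq, Repr

/-- Replace a leading run of `T`'s by `R`'s. -/
def deT : List RVT → List RVT
  | RVT.T :: xs => RVT.R :: deT xs
  | xs => xs

/-- If the word begins with `V`, replace that `V` and the immediately
following `T`'s by `R`'s. -/
def reg : List RVT → List RVT
  | RVT.V :: xs => RVT.R :: deT xs
  | xs => xs

/-- The lifted word `L(W)`: remove the first symbol (an `R`), then replace a
leading maximal critical block `V Tᵗ` by `R^(t+1)`. -/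
def lift (w : List RVT) : List RVT := reg w.tail

/-- Length of the leading run of `T`'s. -/
def countT : List RVT → ℕ
  | RVT.T :: xs => countT xs + 1
  | _ => 0

/-- Fueled version of the front-end recursion for the Puiseux characteristic
(Theorem PCfront): base case `[1]` on all-`R` words; given
`PC(L(W)) = [l0; l1, ..., lg]`,
(A) if `W` begins `RR` then `PC(W) = [l0; l1+l0, ..., lg+l0]`;
(B) if `W` begins `R V T^t R` or `W = R V T^t` then
`PC(W) = [(t+2)l0; (t+3)l0, l1+l0, ..., lg+l0]`;
(C) if `W` begins `R V T^t V` then `PC(W) = [l1; l1+l0, ..., lg+l0]`. -/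
def PCf : ℕ → List RVT → List ℕ
  | 0, _ => [1]
  | _ + 1, [] => [1]
  | fuel + 1, w@(_ :: rest) =>
    if w.all (· = RVT.R) then [1]
    else
      let p := PCf fuel (lift w)
      let l0 := p.headD 1
      let tl := p.tail
      match rest with
      | RVT.V :: xs =>
        match xs.drop (countT xs) with
        | RVT.V :: _ => tl.headD 1 :: tl.map (· + l0)                                -- case (C)
        | _ => ((countT xs + 2) * l0) :: ((countT xs + 3) * l0) :: tl.map (· + l0)   -- case (B)
      | _ => l0 :: tl.map (· + l0)                                                   -- case (A)

/-- The Puiseux characteristic `PC(W)` computed by the front-end recursion. -/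
def PC (w : List RVT) : List ℕ := PCf w.length w

/-- A valid RVT code word: begins with `R`, and `T` occurs only immediately
after a `V` or a `T`. -/
def ValidRVT (w : List RVT) : Prop :=
  w.head? = some RVT.R ∧
  ∀ i, w[i + 1]? = some RVT.T → (w[i]? = some RVT.V ∨ w[i]? = some RVT.T)

/-- The function `E` on strings, with `E_T[a;b] = [a;a+b]`, `E_V[a;b] = [b;a+b]`,
`E_R = E_T`, and base value `E(empty) = [1;2]`; the leftmost symbol acts last. -/
def Efun : List RVT → ℕ × ℕ
  | [] => (1, 2)
  | RVT.V :: q => ((Efun q).2, (Efun q).1 + (Efun q).2)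
  | _ :: q => ((Efun q).1, (Efun q).1 + (Efun q).2)

/-- The Euclidean-type recursion: `Euc(1,2)` is the empty word; for coprime
`a < b`, if `b < 2a` then `Euc(a,b) = V · Euc(b-a,a)`, and if `b > 2a` then
`Euc(a,b) = T · Euc(a,b-a)`. -/
def Euc (a b : ℕ) : List RVT :=
  if a = 1 ∧ b = 2 then []
  else if _h1 : 0 < a ∧ a < b ∧ b < 2 * a then RVT.V :: Euc (b - a) a
  else if _h2 : 0 < a ∧ a < b ∧ 2 * a < b then RVT.T :: Euc a (b - a)
  else []
termination_by a + b
decreasing_by all_goals omega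

def leadingR : List RVT → ℕ
  | RVT.R :: xs => leadingR xs + 1
  | _ => 0

lemma leadingR_replicate_append (n : ℕ) (l : List RVT) :
    leadingR (List.replicate n RVT.R ++ l) = n + leadingR l := by
  induction n with
  | zero => simp
  | succ n ih => simp only [List.replicate_succ, List.cons_append, leadingR, ih]; omega

lemma leadingR_cons_le (c : RVT) (w : List RVT) : leadingR (c :: w) ≤ leadingR w + 1 := by
  cases c <;> simp [leadingR]

lemma leadingR_cons_V_le_one (c : RVT) (xs : List RVT) : leadingR (c :: RVT.V :: xs) ≤ 1 := by
  cases c <;> simp [leadingR]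

lemma deT_eq_replicate_append (xs : List RVT) :
    deT xs = List.replicate (countT xs) RVT.R ++ xs.drop (countT xs) := by
  induction xs with
  | nil => rfl
  | cons x xs ih => cases x <;> simp [deT, countT, ih, List.replicate_succ]

lemma drop_countT_ne_T_cons (xs zs : List RVT) : xs.drop (countT xs) ≠ RVT.T :: zs := by
  induction xs with
  | nil => simp
  | cons x xs ih => cases x <;> simp [countT, ih]

lemma lift_cons_V (c : RVT) (xs : List RVT) :
    lift (c :: RVT.V :: xs) =
      RVT.R :: (List.replicate (countT xs) RVT.R ++ xs.drop (countT xs)) := by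
  simp [lift, reg, deT_eq_replicate_append]

def pcStepA (p : List ℕ) : List ℕ := p.headD 1 :: p.tail.map (· + p.headD 1)

def pcStepB (t : ℕ) (p : List ℕ) : List ℕ :=
  (t + 2) * p.headD 1 :: (t + 3) * p.headD 1 :: p.tail.map (· + p.headD 1)

def pcStepC (p : List ℕ) : List ℕ := p.tail.headD 1 :: p.tail.map (· + p.headD 1)

lemma PCf_of_all_R (fuel : ℕ) (w : List RVT) (h : w.all (· = RVT.R)) : PCf fuel w = [1] := by
  match fuel, w with
  | 0, _ => rfl
  | _ + 1, [] => rfl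
  | _ + 1, _ :: _ => simp only [PCf, if_pos h]

lemma PCf_succ_A (fuel : ℕ) (c : RVT) (rest : List RVT)
    (h : ¬(c :: rest).all (· = RVT.R)) (hrest : ∀ xs, rest ≠ RVT.V :: xs) :
    PCf (fuel + 1) (c :: rest) = pcStepA (PCf fuel rest) := by
  rcases rest with _ | ⟨_ | _ | _, ys⟩
  · simp only [PCf, if_neg h]; rfl
  · simp only [PCf, if_neg h]; rfl
  · exact absurd rfl (hrest ys)
  · simp only [PCf, if_neg h]; rfl

lemma PCf_succ_B (fuel : ℕ) (c : RVT) (xs : List RVT)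
    (h : ¬(c :: RVT.V :: xs).all (· = RVT.R)) (hd : ∀ zs, xs.drop (countT xs) ≠ RVT.V :: zs) :
    PCf (fuel + 1) (c :: RVT.V :: xs) = pcStepB (countT xs) (PCf fuel (lift (c :: RVT.V :: xs))) := by
  rcases he : xs.drop (countT xs) with _ | ⟨_ | _ | _, zs⟩
  · simp only [PCf, if_neg h, he]; rfl
  · simp only [PCf, if_neg h, he]; rfl
  · exact absurd he (hd zs)
  · exact absurd he (drop_countT_ne_T_cons xs zs)

lemma PCf_succ_C (fuel : ℕ) (c : RVT) (xs zs : List RVT)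
    (h : ¬(c :: RVT.V :: xs).all (· = RVT.R)) (hd : xs.drop (countT xs) = RVT.V :: zs) :
    PCf (fuel + 1) (c :: RVT.V :: xs) = pcStepC (PCf fuel (lift (c :: RVT.V :: xs))) := by
  simp only [PCf, if_neg h, hd]; rfl

def PCInv (r : ℕ) : List ℕ → Prop
  | [] => False
  | a :: l => 0 < a ∧ (a :: l).IsChain (· < ·) ∧ ∀ b ∈ l.head?, r * a < b

lemma pcInv_singleton {r a : ℕ} (ha : 0 < a) : PCInv r [a] :=
  ⟨ha, List.isChain_singleton a, by simp⟩

lemma PCInv.mono {r r' : ℕ} {p : List ℕ} (h : PCInv r p) (hr : r' ≤ r) : PCInv r' p := by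
  obtain _ | ⟨a, l⟩ := p
  · exact h.elim
  · exact ⟨h.1, h.2.1, fun b hb => (Nat.mul_le_mul_right a hr).trans_lt (h.2.2 b hb)⟩

lemma PCInv.isChain {r : ℕ} {p : List ℕ} (h : PCInv r p) : p.IsChain (· < ·) := by
  obtain _ | ⟨a, l⟩ := p
  · exact h.elim
  · exact h.2.1

lemma isChain_map_add {l : List ℕ} (h : l.IsChain (· < ·)) (k : ℕ) :
    (l.map (· + k)).IsChain (· < ·) :=
  List.isChain_map_of_isChain (· + k) (fun _ _ hab => Nat.add_lt_add_right hab k) h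

lemma PCInv.stepA {r : ℕ} {p : List ℕ} (h : PCInv r p) : PCInv (r + 1) (pcStepA p) := by
  obtain _ | ⟨a, _ | ⟨b, l⟩⟩ := p
  · exact h.elim
  · exact pcInv_singleton h.1
  obtain ⟨ha, hchain, hgap⟩ := h
  have hab : a < b := (List.isChain_cons_cons.mp hchain).1
  have hrab : r * a < b := hgap b rfl
  simp only [pcStepA, List.headD_cons, List.tail_cons, List.map_cons]
  refine ⟨ha, List.isChain_cons_cons.mpr ⟨by omega, isChain_map_add hchain.tail a⟩, ?_⟩
  simp only [List.head?_cons, Option.mem_some_iff, forall_eq']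
  rw [add_one_mul]
  omega

lemma PCInv.stepB {t : ℕ} {p : List ℕ} (h : PCInv (t + 2) p) : PCInv 1 (pcStepB t p) := by
  obtain _ | ⟨a, l⟩ := p
  · exact h.elim
  obtain ⟨ha, hchain, hgap⟩ := h
  have hstep : (t + 2) * a < (t + 3) * a := Nat.mul_lt_mul_of_pos_right (by omega) ha
  refine ⟨Nat.mul_pos (by omega) ha, List.isChain_cons_cons.mpr ⟨hstep, ?_⟩, by simpa using hstep⟩
  obtain _ | ⟨b, l⟩ := l
  · exact List.isChain_singleton _
  · have hb : (t + 2) * a < b := hgap b rfl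
    have hb' : (t + 3) * a < b + a := by
      rw [show t + 3 = (t + 2) + 1 from rfl, add_one_mul]
      omega
    exact List.isChain_cons_cons.mpr ⟨hb', isChain_map_add hchain.tail a⟩

lemma PCInv.stepC {r : ℕ} {p : List ℕ} (h : PCInv r p) : PCInv 1 (pcStepC p) := by
  obtain _ | ⟨a, _ | ⟨b, l⟩⟩ := p
  · exact h.elim
  · exact pcInv_singleton one_pos
  obtain ⟨ha, hchain, -⟩ := h
  have hab : a < b := (List.isChain_cons_cons.mp hchain).1
  simp only [pcStepC, List.headD_cons, List.tail_cons, List.map_cons]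
  refine ⟨by omega, List.isChain_cons_cons.mpr ⟨by omega, isChain_map_add hchain.tail a⟩, ?_⟩
  simp only [List.head?_cons, Option.mem_some_iff, forall_eq']
  omega

lemma pcInv_lift_cons_V_of_not_C (fuel : ℕ) (c : RVT) (xs : List RVT)
    (hd : ∀ zs, xs.drop (countT xs) ≠ RVT.V :: zs)
    (ih : PCInv (leadingR (lift (c :: RVT.V :: xs))) (PCf fuel (lift (c :: RVT.V :: xs)))) :
    PCInv (countT xs + 2) (PCf fuel (lift (c :: RVT.V :: xs))) := by
  rcases he : xs.drop (countT xs) with _ | ⟨_ | _ | _, ys⟩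
  · rw [PCf_of_all_R]
    · exact pcInv_singleton one_pos
    · simp [lift_cons_V, he]
  · refine ih.mono ?_
    rw [lift_cons_V, he, leadingR, leadingR_replicate_append, leadingR]
    omega
  · exact absurd he (hd ys)
  · exact absurd he (drop_countT_ne_T_cons xs ys)

theorem pcInv_PCf : ∀ (fuel : ℕ) (w : List RVT), PCInv (leadingR w) (PCf fuel w)
  | 0, _ => pcInv_singleton one_pos
  | _ + 1, [] => pcInv_singleton one_pos
  | fuel + 1, c :: rest => by
    by_cases hall : (c :: rest).all (· = RVT.R)
    · rw [PCf_of_all_R _ _ hall]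
      exact pcInv_singleton one_pos
    by_cases hV : ∃ xs, rest = RVT.V :: xs
    · obtain ⟨xs, rfl⟩ := hV
      have ih := pcInv_PCf fuel (lift (c :: RVT.V :: xs))
      refine PCInv.mono ?_ (leadingR_cons_V_le_one c xs)
      by_cases hC : ∃ zs, xs.drop (countT xs) = RVT.V :: zs
      · obtain ⟨zs, hd⟩ := hC
        rw [PCf_succ_C fuel c xs zs hall hd]
        exact ih.stepC
      · push Not at hC
        rw [PCf_succ_B fuel c xs hall hC]
        exact (pcInv_lift_cons_V_of_not_C fuel c xs hC ih).stepB
    · push Not at hV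
      rw [PCf_succ_A fuel c rest hall hV]
      exact (pcInv_PCf fuel rest).stepA.mono (leadingR_cons_le c rest)

theorem statement2_general (W : List RVT) :
    (PC W).Chain' (· < ·) :=
  (pcInv_PCf W.length W).isChain

/-- The entries of the Puiseux characteristic of any RVT code word are
strictly increasing. -/
theorem statement2 (W : List RVT) (hW : ValidRVT W) :
    (PC W).Chain' (· < ·) :=
  statement2_general W
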